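/- arXiv:2507.16588 — 2 statements merged into one kernel-verified Lean document; each statement's English description precedes it below -/
import Mathlib

section
/- Under Sc^M ≥ 2Λ with Λ ≤ 0, if Σ is a closed area-constrained Willmore surface with H > 0 and Lagrange parameter λ ≥ −(2/3)Λ, then ∫_Σ (H² + (4/3)Λ) dμ ≤ 16π, i.e. the Hawking energy with cosmological constant E_Λ(Σ) is nonnegative. -/
/-!
STATEMENT 3: Under Sc^M ≥ 2Λ with Λ ≤ 0, if Σ is a closed area-constrained Willmore
surface with H > 0 and Lagrange parameter λ ≥ −(2/3)Λ, then ∫_Σ (H² + (4/3)Λ) dμ ≤ 16π,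
i.e. the Hawking energy with cosmological constant E_Λ(Σ) is nonnegative.

Shallow model as before; E_Λ(Σ) = √(|Σ|/16π)(1 − (1/16π)∫_Σ (H² + (4/3)Λ) dμ).
-/

open MeasureTheory

theorem hawking_energy_nonneg_cosmological
    {S : Type*} [MeasurableSpace S] (μ : Measure S) [IsFiniteMeasure μ]
    (H ΔH gradLog2 B2 Ric ScM ScS : S → ℝ) (lam Λ : ℝ)
    (hΛ : Λ ≤ 0)
    (hHpos : ∀ x, 0 < H x)
    (hlam : -(2 / 3) * Λ ≤ lam)
    (hScM : ∀ x, 2 * Λ ≤ ScM x)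
    (hgrad : ∀ x, 0 ≤ gradLog2 x)
    (hB2 : ∀ x, 0 ≤ B2 x)
    (hWillmore : ∀ x, 0 = lam * H x + ΔH x + H x * B2 x + H x * Ric x)
    (hGauss : ∀ x, ScS x = ScM x - 2 * Ric x + H x ^ 2 / 2 - B2 x)
    (hGaussBonnet : ∫ x, ScS x ∂μ ≤ 8 * Real.pi)
    (hIntΔ : Integrable (fun x => ΔH x / H x) μ)
    (hIntGrad : Integrable gradLog2 μ)
    (hIntB2 : Integrable B2 μ)
    (hIntRic : Integrable Ric μ)
    (hIntScM : Integrable ScM μ)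
    (hIntScS : Integrable ScS μ)
    (hIntH2 : Integrable (fun x => H x ^ 2) μ)
    (hIBP : ∫ x, ΔH x / H x ∂μ = ∫ x, gradLog2 x ∂μ) :
    (∫ x, (H x ^ 2 + (4 / 3) * Λ) ∂μ ≤ 16 * Real.pi) ∧
    0 ≤ Real.sqrt ((μ Set.univ).toReal / (16 * Real.pi)) *
        (1 - (1 / (16 * Real.pi)) * ∫ x, (H x ^ 2 + (4 / 3) * Λ) ∂μ) := by
  have hA : (0:ℝ) ≤ (μ Set.univ).toReal := ENNReal.toReal_nonneg
  set A := (μ Set.univ).toReal with hAdef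
  -- pointwise identity
  have hpt : ∀ x, ScS x = ScM x + 2 * lam + 2 * (ΔH x / H x) + B2 x + H x ^ 2 / 2 := by
    intro x
    have hH := (hHpos x).ne'
    have hR : Ric x = -lam - ΔH x / H x - B2 x := by
      field_simp
      linarith [hWillmore x]
    rw [hGauss x, hR]; ring
  -- integral identity
  have hint : ∫ x, ScS x ∂μ
      = (∫ x, ScM x ∂μ) + 2 * lam * A + 2 * (∫ x, ΔH x / H x ∂μ)
        + (∫ x, B2 x ∂μ) + (1/2) * ∫ x, H x ^ 2 ∂μ := by
    have h1 : (fun x => ScS x) = fun x => ScM x + 2 * lam + 2 * (ΔH x / H x) + B2 x + H x ^ 2 / 2 := funext hpt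
    rw [h1]
    have i1 : Integrable (fun x => ScM x + 2 * lam) μ := hIntScM.add (integrable_const _)
    have i2 : Integrable (fun x => ScM x + 2 * lam + 2 * (ΔH x / H x)) μ := i1.add (hIntΔ.const_mul 2)
    have i3 : Integrable (fun x => ScM x + 2 * lam + 2 * (ΔH x / H x) + B2 x) μ := i2.add hIntB2
    have i4 : Integrable (fun x => H x ^ 2 / 2) μ := hIntH2.div_const 2
    rw [integral_add i3 i4, integral_add i2 hIntB2, integral_add i1 (hIntΔ.const_mul 2),
      integral_add hIntScM (integrable_const _)]
    rw [integral_const, integral_const_mul, integral_div]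
    simp only [smul_eq_mul, measureReal_def, ← hAdef]
    ring
  have hScMint : 2 * Λ * A ≤ ∫ x, ScM x ∂μ := by
    have := integral_mono (integrable_const (2*Λ)) hIntScM hScM
    simpa [integral_const, mul_comm, smul_eq_mul, measureReal_def, ← hAdef] using this
  have hgradint : 0 ≤ ∫ x, gradLog2 x ∂μ := integral_nonneg hgrad
  have hB2int : 0 ≤ ∫ x, B2 x ∂μ := integral_nonneg hB2
  have hH2 : ∫ x, H x ^ 2 ∂μ ≤ 16 * Real.pi - (4/3) * Λ * A := by
    rw [hint, hIBP] at hGaussBonnet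
    nlinarith [hGaussBonnet, hlam]
  have hsum : ∫ x, (H x ^ 2 + (4/3) * Λ) ∂μ = (∫ x, H x ^ 2 ∂μ) + (4/3) * Λ * A := by
    rw [integral_add hIntH2 (integrable_const _), integral_const]
    simp [hAdef, measureReal_def]; ring
  have hmain : ∫ x, (H x ^ 2 + (4/3) * Λ) ∂μ ≤ 16 * Real.pi := by
    rw [hsum]; linarith
  refine ⟨hmain, mul_nonneg (Real.sqrt_nonneg _) ?_⟩
  have hpi : (0:ℝ) < 16 * Real.pi := by positivity
  have : (1 / (16 * Real.pi)) * ∫ x, (H x ^ 2 + (4/3) * Λ) ∂μ ≤ 1 := by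
    rw [div_mul_eq_mul_div, one_mul, div_le_one hpi]
    exact hmain
  linarith
end

section
/- Let Σ be a closed area-constrained Willmore hypersurface with H > 0 in an n-dimensional (n ≥ 3) manifold with Sc^M ≥ 0. If λ ≥ (n−3)/(2(n−2)|Σ|) ∫_Σ Sc^Σ dμ, then (1/(n−1)) ∫_Σ H² dμ ≤ (1/(n−2)) ∫_Σ Sc^Σ dμ, i.e. the higher-dimensional Hawking energy E_{n,1}(Σ) is nonnegative. -/
/-!
STATEMENT 8: Let Σ be a closed area-constrained Willmore hypersurface with H > 0 in an
n-dimensional (n ≥ 3) manifold with Sc^M ≥ 0. If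
λ ≥ (n−3)/(2(n−2)|Σ|) ∫_Σ Sc^Σ dμ, then (1/(n−1))∫_Σ H² dμ ≤ (1/(n−2))∫_Σ Sc^Σ dμ,
i.e. the higher-dimensional Hawking energy E_{n,1}(Σ) is nonnegative.

Shallow model: Σ is a finite measure space; the higher-dimensional Willmore equation,
the higher-dimensional Gauss equation, and the integration-by-parts identity
∫ Δ^Σ H/H = ∫ |∇^Σ log H|² are supplied as hypotheses.
-/

open MeasureTheory

theorem hawking_energy_nonneg_higher_dim
    {S : Type*} [MeasurableSpace S] (μ : Measure S) [IsFiniteMeasure μ]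
    (n : ℕ) (hn : 3 ≤ n)
    (H ΔH gradLog2 B2 Ric ScM ScS : S → ℝ) (lam : ℝ)
    (hHpos : ∀ x, 0 < H x)
    (hScM : ∀ x, 0 ≤ ScM x)
    (hgrad : ∀ x, 0 ≤ gradLog2 x)
    (hB2 : ∀ x, 0 ≤ B2 x)
    (hWillmore : ∀ x, 0 = lam * H x + ΔH x
        - (((n : ℝ) - 3) / (2 * ((n : ℝ) - 1))) * H x ^ 3
        + H x * B2 x + H x * Ric x)
    (hGauss : ∀ x, ScS x = ScM x - 2 * Ric x
        + (((n : ℝ) - 2) / ((n : ℝ) - 1)) * H x ^ 2 - B2 x)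
    (hIntΔ : Integrable (fun x => ΔH x / H x) μ)
    (hIntGrad : Integrable gradLog2 μ)
    (hIntB2 : Integrable B2 μ)
    (hIntRic : Integrable Ric μ)
    (hIntScM : Integrable ScM μ)
    (hIntScS : Integrable ScS μ)
    (hIntH2 : Integrable (fun x => H x ^ 2) μ)
    (hIntH3 : Integrable (fun x => H x ^ 3) μ)
    (hIBP : ∫ x, ΔH x / H x ∂μ = ∫ x, gradLog2 x ∂μ)
    (hlam : (((n : ℝ) - 3) / (2 * ((n : ℝ) - 2) * (μ Set.univ).toReal))
        * ∫ x, ScS x ∂μ ≤ lam) :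
    (1 / ((n : ℝ) - 1)) * ∫ x, H x ^ 2 ∂μ
      ≤ (1 / ((n : ℝ) - 2)) * ∫ x, ScS x ∂μ := by
  set e : ℝ := (n : ℝ) with he
  have he3 : (3:ℝ) ≤ e := by rw [he]; exact_mod_cast hn
  have hp : (0:ℝ) < e - 1 := by linarith
  have hq : (0:ℝ) < e - 2 := by linarith
  -- pointwise combined identity
  have keyE : ∀ x, (e-1) * ScS x
      = 2*(e-1)*lam + 2*(e-1)*(ΔH x / H x) + (e-1)*B2 x + (e-1)*ScM x + H x ^ 2 := by
    intro x
    have hx : H x ≠ 0 := (hHpos x).ne'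
    have hw := hWillmore x
    have hg := hGauss x
    field_simp at hw hg ⊢
    linear_combination H x * hg + hw
  have hE : (e-1) * (∫ x, ScS x ∂μ)
      = 2*(e-1)*lam*(μ Set.univ).toReal + 2*(e-1)*(∫ x, gradLog2 x ∂μ)
        + (e-1)*(∫ x, B2 x ∂μ) + (e-1)*(∫ x, ScM x ∂μ) + ∫ x, H x ^ 2 ∂μ := by
    have h1 : ∫ x, (e-1) * ScS x ∂μ
        = ∫ x, (2*(e-1)*lam + 2*(e-1)*(ΔH x / H x) + (e-1)*B2 x + (e-1)*ScM x + H x ^ 2) ∂μ := by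
      exact integral_congr_ae (Filter.Eventually.of_forall keyE)
    rw [integral_const_mul] at h1
    have ic : Integrable (fun _ : S => 2*(e-1)*lam) μ := integrable_const _
    have iΔ : Integrable (fun x => 2*(e-1)*(ΔH x / H x)) μ := hIntΔ.const_mul _
    have iB : Integrable (fun x => (e-1)*B2 x) μ := hIntB2.const_mul _
    have iM : Integrable (fun x => (e-1)*ScM x) μ := hIntScM.const_mul _
    have s1 : Integrable (fun x => 2*(e-1)*lam + 2*(e-1)*(ΔH x / H x)) μ := by
      exact ic.add iΔ
    have s2 : Integrable (fun x => 2*(e-1)*lam + 2*(e-1)*(ΔH x / H x) + (e-1)*B2 x) μ := by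
      exact s1.add iB
    have s3 : Integrable
        (fun x => 2*(e-1)*lam + 2*(e-1)*(ΔH x / H x) + (e-1)*B2 x + (e-1)*ScM x) μ := by
      exact s2.add iM
    rw [integral_add s3 hIntH2, integral_add s2 iM, integral_add s1 iB, integral_add ic iΔ,
        integral_const, integral_const_mul, integral_const_mul, integral_const_mul,
        hIBP, smul_eq_mul, measureReal_def] at h1
    linarith [h1]
  have hIG : 0 ≤ ∫ x, gradLog2 x ∂μ := integral_nonneg hgrad
  have hIB : 0 ≤ ∫ x, B2 x ∂μ := integral_nonneg hB2
  have hIM : 0 ≤ ∫ x, ScM x ∂μ := integral_nonneg hScM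
  have hIH : 0 ≤ ∫ x, H x ^ 2 ∂μ := integral_nonneg fun x => sq_nonneg (H x)
  rcases eq_or_ne μ 0 with hμ | hμ
  · simp [hμ]
  · have hApos : 0 < (μ Set.univ).toReal := by
      apply ENNReal.toReal_pos
      · simpa [Measure.measure_univ_eq_zero] using hμ
      · exact measure_ne_top μ _
    have hlam2 : (e-3) * (∫ x, ScS x ∂μ) ≤ 2*(e-2)*(lam * (μ Set.univ).toReal) := by
      have h := mul_le_mul_of_nonneg_right hlam hApos.le
      have hne : (μ Set.univ).toReal ≠ 0 := hApos.ne'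
      have heq : ((e-3) / (2*(e-2)*(μ Set.univ).toReal)) * (∫ x, ScS x ∂μ)
            * (μ Set.univ).toReal
          = ((e-3) * (∫ x, ScS x ∂μ)) / (2*(e-2)) := by
        field_simp
      rw [heq] at h
      rw [div_le_iff₀ (by linarith : (0:ℝ) < 2*(e-2))] at h
      linarith [h]
    rw [div_mul_eq_mul_div, div_mul_eq_mul_div, div_le_div_iff₀ hp hq]
    have hE2 := congrArg (fun t => (e-2) * t) hE
    have hlam3 := mul_le_mul_of_nonneg_left hlam2 hp.le
    nlinarith [hE2, hlam3, mul_nonneg (mul_nonneg hq.le hp.le) hIG,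
      mul_nonneg (mul_nonneg hq.le hp.le) hIB, mul_nonneg (mul_nonneg hq.le hp.le) hIM,
      mul_nonneg hq.le hIH]
end
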